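/- If σ(λ): X → X is a family of involutions that is a symmetry of a reversible Yang–Baxter map R(λ,μ), i.e. (σ(λ)×σ(μ))∘R(λ,μ) = R(λ,μ)∘(σ(λ)×σ(μ)), then the twisted map R^σ(λ,μ) = (σ(λ)×Id)∘R(λ,μ)∘(Id×σ(μ)) is also a reversible Yang–Baxter map. -/
import Mathlib


open Function

/-- lift a map on pairs to act on coordinates 1,2 of a triple -/
def lift12 {X : Type*} (f : X × X → X × X) : X × X × X → X × X × X :=
  fun p => ((f (p.1, p.2.1)).1, (f (p.1, p.2.1)).2, p.2.2)

/-- lift to coordinates 1,3 -/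
def lift13 {X : Type*} (f : X × X → X × X) : X × X × X → X × X × X :=
  fun p => ((f (p.1, p.2.2)).1, p.2.1, (f (p.1, p.2.2)).2)

/-- lift to coordinates 2,3 -/
def lift23 {X : Type*} (f : X × X → X × X) : X × X × X → X × X × X :=
  fun p => (p.1, (f (p.2.1, p.2.2)).1, (f (p.2.1, p.2.2)).2)

/-- the Yang–Baxter relation for a parameter-dependent map on X × X -/
def IsYangBaxter {X Λ : Type*} (R : Λ → Λ → X × X → X × X) : Prop :=
  ∀ l1 l2 l3 : Λ,
    lift23 (R l2 l3) ∘ lift13 (R l1 l3) ∘ lift12 (R l1 l2) =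
      lift12 (R l1 l2) ∘ lift13 (R l1 l3) ∘ lift23 (R l2 l3)

/-- reversibility: R²¹(μ,λ) ∘ R(λ,μ) = Id, where R²¹(μ,λ) = τ ∘ R(μ,λ) ∘ τ -/
def IsReversible {X Λ : Type*} (R : Λ → Λ → X × X → X × X) : Prop :=
  ∀ (l m : Λ) (p : X × X),
    Prod.swap (R m l (Prod.swap (R l m p))) = p

theorem symmetry_twist_preserves_reversible_yangBaxter {X Λ : Type*}
    (R : Λ → Λ → X × X → X × X) (σ : Λ → X → X)
    (hinv : ∀ l : Λ, σ l ∘ σ l = id)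
    (hsym : ∀ l m : Λ,
      (fun p : X × X => (σ l p.1, σ m p.2)) ∘ R l m =
        R l m ∘ (fun p : X × X => (σ l p.1, σ m p.2)))
    (hYB : IsYangBaxter R) (hRev : IsReversible R) :
    IsYangBaxter (fun l m p => ((σ l (R l m (p.1, σ m p.2)).1), (R l m (p.1, σ m p.2)).2)) ∧
      IsReversible (fun l m p => ((σ l (R l m (p.1, σ m p.2)).1), (R l m (p.1, σ m p.2)).2)) := by
  have hinv' : ∀ l x, σ l (σ l x) = x := fun l x => congrFun (hinv l) x
  have hsym' : ∀ l m (x y : X), R l m (σ l x, σ m y) =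
      (σ l (R l m (x, y)).1, σ m (R l m (x, y)).2) := by
    intro l m x y
    have h := congrFun (hsym l m) (x, y)
    simpa using h.symm
  have hsymL : ∀ l m (x y : X), R l m (σ l x, y) =
      (σ l (R l m (x, σ m y)).1, σ m (R l m (x, σ m y)).2) := by
    intro l m x y
    conv_lhs => rw [← hinv' m y]
    rw [hsym']
  refine ⟨?_, ?_⟩
  · intro l1 l2 l3
    funext p
    obtain ⟨x, y, z⟩ := p
    have hYB' := congrFun (hYB l1 l2 l3) (x, σ l2 y, z)
    simp only [lift12, lift13, lift23, comp_apply] at hYB' ⊢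
    rw [hsym' l1 l3 _ z]
    rw [hsym' l1 l2]
    rw [hsymL l2 l3 y z] at hYB'
    simp only [hinv'] at hYB' ⊢
    simp only [Prod.mk.injEq] at hYB' ⊢
    exact ⟨hYB'.1, congrArg (σ l2) hYB'.2.1, hYB'.2.2⟩
  · intro l m p
    obtain ⟨x, y⟩ := p
    have h := hRev l m (x, σ m y)
    simp only [Prod.swap, hinv', Prod.mk.injEq] at h ⊢
    exact ⟨h.1, by rw [h.2, hinv']⟩
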